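/- arXiv:2510.22864 — 5 statements merged into one kernel-verified Lean document; each statement's English description precedes it below -/
import Mathlib

section
/- In the AR(p)-type potential outcome model with ε_t(1) = ε_t(0) for all t, the average lag-k treatment effect τ_k = (T−K)^{-1} Σ_{t=K+1}^T τ_{t,k} equals Ψ_k · (T−K)^{-1} Σ_{t=K+1}^T (μ_{t-k}(1) − μ_{t-k}(0)), where Ψ_k is the k-step impulse-response coefficient. -/
open MeasureTheory

/-- In the AR(p)-type potential outcome model with `ε_t(1) = ε_t(0)` for all `t`,
the average lag-`k` treatment effect `τ_k = (T-K)⁻¹ Σ_{t=K+1}^T τ_{t,k}` equals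
`Ψ_k · (T-K)⁻¹ Σ_{t=K+1}^T (μ_{t-k}(1) - μ_{t-k}(0))`, where `Ψ_k` is the `k`-step
impulse-response coefficient and `τ_{t,k}` is the expectation (over the random
treatment path) of the effect of switching `z_{t-k}` from 0 to 1. -/
theorem stmt5 {Ω : Type*} [MeasurableSpace Ω] (μ : Measure Ω) [IsProbabilityMeasure μ]
    (p : ℕ) (φ : ℕ → ℝ) (μf εf : ℕ → Bool → ℝ)
    (hε : ∀ t, εf t true = εf t false)
    (Ψ : ℕ → ℝ) (hΨ0 : Ψ 0 = 1)
    (hΨ : ∀ j, 1 ≤ j → Ψ j = ∑ i ∈ Finset.Icc 1 (min p j), φ i * Ψ (j - i))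
    (Y : ℕ → (ℕ → Bool) → ℝ)
    (hY : ∀ t, 1 ≤ t → ∀ z : ℕ → Bool,
      Y t z = μf t (z t) + (∑ i ∈ Finset.Icc 1 (min p (t - 1)), φ i * Y (t - i) z)
        + εf t (z t))
    (T K k : ℕ) (hk : k ≤ K) (hKT : K < T)
    (Z : Ω → ℕ → Bool) :
    (T - K : ℝ)⁻¹ * (∑ t ∈ Finset.Icc (K + 1) T,
        ∫ ω, (Y t (Function.update (Z ω) (t - k) true)
              - Y t (Function.update (Z ω) (t - k) false)) ∂μ)
      = Ψ k * ((T - K : ℝ)⁻¹ * ∑ t ∈ Finset.Icc (K + 1) T,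
          (μf (t - k) true - μf (t - k) false)) := by
  -- Key pointwise lemma, by strong induction on t
  have key : ∀ (z : ℕ → Bool) (s : ℕ), 1 ≤ s → ∀ t, 1 ≤ t →
      Y t (Function.update z s true) - Y t (Function.update z s false)
        = (if s ≤ t then Ψ (t - s) else 0) * (μf s true - μf s false) := by
    intro z s hs t
    induction t using Nat.strong_induction_on with
    | _ t IH =>
      intro ht
      rw [hY t ht, hY t ht]
      have hsum : (∑ i ∈ Finset.Icc 1 (min p (t-1)), φ i * Y (t-i) (Function.update z s true))
          - (∑ i ∈ Finset.Icc 1 (min p (t-1)), φ i * Y (t-i) (Function.update z s false))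
          = ∑ i ∈ Finset.Icc 1 (min p (t-1)),
              φ i * ((if s ≤ t-i then Ψ (t-i-s) else 0) * (μf s true - μf s false)) := by
        rw [← Finset.sum_sub_distrib]
        refine Finset.sum_congr rfl ?_
        intro i hi
        simp only [Finset.mem_Icc] at hi
        rw [← mul_sub, IH (t-i) (by omega) (by omega)]
      by_cases hts : t = s
      · subst hts
        have h0 : (∑ i ∈ Finset.Icc 1 (min p (t-1)),
            φ i * ((if t ≤ t-i then Ψ (t-i-t) else 0) * (μf t true - μf t false))) = 0 := by
          refine Finset.sum_eq_zero ?_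
          intro i hi
          simp only [Finset.mem_Icc] at hi
          rw [if_neg (by omega)]
          ring
        simp only [Function.update_self]
        rw [if_pos le_rfl, Nat.sub_self, hΨ0, hε t]
        have : ∀ b : Bool, μf t b + (∑ i ∈ Finset.Icc 1 (min p (t-1)),
            φ i * Y (t-i) (Function.update z t b)) + εf t false
            = (μf t b + εf t false) + ∑ i ∈ Finset.Icc 1 (min p (t-1)),
              φ i * Y (t-i) (Function.update z t b) := by intro b; ring
        rw [this, this]
        rw [show ((μf t true + εf t false) + ∑ i ∈ Finset.Icc 1 (min p (t-1)),
              φ i * Y (t-i) (Function.update z t true))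
            - ((μf t false + εf t false) + ∑ i ∈ Finset.Icc 1 (min p (t-1)),
              φ i * Y (t-i) (Function.update z t false))
            = (μf t true - μf t false) + ((∑ i ∈ Finset.Icc 1 (min p (t-1)),
              φ i * Y (t-i) (Function.update z t true))
              - ∑ i ∈ Finset.Icc 1 (min p (t-1)),
              φ i * Y (t-i) (Function.update z t false)) from by ring]
        rw [hsum, h0]
        ring
      · have hvt : ∀ b : Bool, Function.update z s b t = z t := by
          intro b; exact Function.update_of_ne hts b z
        rw [hvt, hvt]
        rw [show (μf t (z t) + (∑ i ∈ Finset.Icc 1 (min p (t-1)),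
              φ i * Y (t-i) (Function.update z s true)) + εf t (z t))
            - (μf t (z t) + (∑ i ∈ Finset.Icc 1 (min p (t-1)),
              φ i * Y (t-i) (Function.update z s false)) + εf t (z t))
            = (∑ i ∈ Finset.Icc 1 (min p (t-1)),
              φ i * Y (t-i) (Function.update z s true))
              - ∑ i ∈ Finset.Icc 1 (min p (t-1)),
              φ i * Y (t-i) (Function.update z s false) from by ring]
        rw [hsum]
        by_cases hst : s ≤ t
        · have hst' : s < t := lt_of_le_of_ne hst (fun h => hts h.symm)
          rw [if_pos hst]
          have h1 : ∀ i ∈ Finset.Icc 1 (min p (t-1)),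
              φ i * ((if s ≤ t-i then Ψ (t-i-s) else 0) * (μf s true - μf s false))
              = if s ≤ t - i then φ i * Ψ (t-s-i) * (μf s true - μf s false) else 0 := by
            intro i hi
            simp only [Finset.mem_Icc] at hi
            split
            · rw [show t - i - s = t - s - i from by omega]; ring
            · ring
          rw [Finset.sum_congr rfl h1, ← Finset.sum_filter]
          have hfil : Finset.filter (fun i => s ≤ t - i) (Finset.Icc 1 (min p (t-1)))
              = Finset.Icc 1 (min p (t-s)) := by
            ext i
            simp only [Finset.mem_filter, Finset.mem_Icc]
            omega
          rw [hfil, hΨ (t-s) (by omega), Finset.sum_mul]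
        · rw [if_neg hst]
          rw [show (0 : ℝ) * (μf s true - μf s false) = 0 from by ring]
          refine Finset.sum_eq_zero ?_
          intro i hi
          simp only [Finset.mem_Icc] at hi
          rw [if_neg (by omega)]
          ring
  -- each integrand is constant
  have hmain : ∀ t ∈ Finset.Icc (K+1) T,
      (∫ ω, (Y t (Function.update (Z ω) (t - k) true)
              - Y t (Function.update (Z ω) (t - k) false)) ∂μ)
      = Ψ k * (μf (t-k) true - μf (t-k) false) := by
    intro t ht
    simp only [Finset.mem_Icc] at ht
    have hconst : ∀ ω, Y t (Function.update (Z ω) (t - k) true)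
        - Y t (Function.update (Z ω) (t - k) false)
        = Ψ k * (μf (t-k) true - μf (t-k) false) := by
      intro ω
      rw [key (Z ω) (t-k) (by omega) t (by omega), if_pos (by omega),
        show t - (t - k) = k from by omega]
    rw [integral_congr_ae (Filter.Eventually.of_forall hconst)]
    simp
  rw [Finset.sum_congr rfl hmain, ← Finset.mul_sum]
  ring
end

section
/- Let Z₁,...,Z_T be independent Bernoulli(p_t) with p_t ∈ (0,1), Z̃_t = (Z_t−p_t)/(p_t(1−p_t)), w_k = [(T−K)^{-1} Σ_{t=K+1}^T (p_{t-k}(1−p_{t-k}))^{-1}]^{-1}, and let Y_t be any function of (Z_t,...,Z_1). Then for every k ∈ {0,...,K}, E[(T−K)^{-1} Σ_{t=K+1}^T Z̃_{t-k}(Y_t − Σ_{ℓ=0}^K Z̃_{t-ℓ} w_ℓ τ_ℓ)] = 0, where τ_k = (T−K)^{-1} Σ_{t=K+1}^T E[Z̃_{t-k} Y_t]. -/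
/-!
By independence, `E[Z̃_a Z̃_b] = (p_a (1 - p_a))⁻¹` if `a = b` and `0` otherwise. So in the `k`-th
moment only the regressor `ℓ = k` survives, the expected score is
`τ_k - w_k τ_k (T - K)⁻¹ ∑_t (p_{t-k} (1 - p_{t-k}))⁻¹`, and `w_k` is precisely the inverse of the
harmonic-mean factor multiplying `τ_k`.
-/

/-- Expectation of a functional of a path of independent Bernoulli treatments
`Z_0,...,Z_{T-1}` with `P(Z_t = true) = p_t` (times `≥ T` are padded with `false`). -/
noncomputable def Exp (T : ℕ) (p : ℕ → ℝ) (g : (ℕ → Bool) → ℝ) : ℝ :=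
  ∑ z : Fin T → Bool,
    (∏ t : Fin T, if z t then p t.val else 1 - p t.val) *
      g (fun n => if h : n < T then z ⟨n, h⟩ else false)

/-- Normalized treatment indicator `Z̃_t = (Z_t - p_t)/(p_t(1-p_t))`. -/
noncomputable def ztil (p : ℕ → ℝ) (z : ℕ → Bool) (t : ℕ) : ℝ :=
  ((if z t then 1 else 0) - p t) / (p t * (1 - p t))

noncomputable def ztilVal (p : ℕ → ℝ) (s : ℕ) (c : Bool) : ℝ :=
  ((if c then 1 else 0) - p s) / (p s * (1 - p s))

theorem ztil_eq_ztilVal (p : ℕ → ℝ) (z : ℕ → Bool) (s : ℕ) : ztil p z s = ztilVal p s (z s) :=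
  rfl

theorem ztilVal_mean (p : ℕ → ℝ) (s : ℕ) :
    p s * ztilVal p s true + (1 - p s) * ztilVal p s false = 0 := by
  simp only [ztilVal, if_true, Bool.false_eq_true, if_false]
  ring

theorem ztilVal_second_moment (p : ℕ → ℝ) (s : ℕ) :
    p s * ztilVal p s true ^ 2 + (1 - p s) * ztilVal p s false ^ 2 = (p s * (1 - p s))⁻¹ := by
  simp only [ztilVal, if_true, Bool.false_eq_true, if_false]
  have h_num : ∀ v : ℝ,
      p s * ((1 - p s) / v) ^ 2 + (1 - p s) * ((0 - p s) / v) ^ 2 = p s * (1 - p s) / (v * v) :=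
    fun v => by ring
  rw [h_num, div_self_mul_self']

section Expectation

variable (T : ℕ) (p : ℕ → ℝ)

theorem Exp_prod (φ : Fin T → Bool → ℝ) :
    Exp T p (fun z => ∏ t : Fin T, φ t (z t)) =
      ∏ t : Fin T, (p t * φ t true + (1 - p t) * φ t false) := by
  classical
  simp only [Exp, Fin.is_lt, dif_pos, Fin.eta, ← Finset.prod_mul_distrib]
  rw [← Fintype.prod_sum (fun (t : Fin T) (c : Bool) => (if c then p t else 1 - p t) * φ t c)]
  simp

theorem Exp_sum {ι : Type*} (s : Finset ι) (g : ι → (ℕ → Bool) → ℝ) :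
    Exp T p (fun z => ∑ i ∈ s, g i z) = ∑ i ∈ s, Exp T p (g i) := by
  simp only [Exp, Finset.mul_sum]
  exact Finset.sum_comm

theorem Exp_const_mul (c : ℝ) (g : (ℕ → Bool) → ℝ) :
    Exp T p (fun z => c * g z) = c * Exp T p g := by
  simp only [Exp, Finset.mul_sum, mul_left_comm]

theorem Exp_sub (g h : (ℕ → Bool) → ℝ) :
    Exp T p (fun z => g z - h z) = Exp T p g - Exp T p h := by
  simp only [Exp, mul_sub, Finset.sum_sub_distrib]

theorem Exp_ztil_mul_ztil {a b : ℕ} (ha : a < T) (hb : b < T) :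
    Exp T p (fun z => ztil p z a * ztil p z b) =
      if a = b then (p a * (1 - p a))⁻¹ else 0 := by
  classical
  let φ : Fin T → Bool → ℝ := fun t c =>
    (if t = ⟨a, ha⟩ then ztilVal p a c else 1) * (if t = ⟨b, hb⟩ then ztilVal p b c else 1)
  have h_prod : (fun z => ztil p z a * ztil p z b) = fun z => ∏ t : Fin T, φ t (z t) := by
    ext z
    simp only [φ, Finset.prod_mul_distrib, Finset.prod_ite_eq', Finset.mem_univ, if_true,
      ztil_eq_ztilVal]
  rw [h_prod, Exp_prod]
  split_ifs with hab
  · subst hab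
    rw [Finset.prod_eq_single ⟨a, ha⟩]
    · simpa [φ, ← sq] using ztilVal_second_moment p a
    · intro t _ ht
      simp [φ, ht]
    · simp
  · apply Finset.prod_eq_zero (Finset.mem_univ ⟨a, ha⟩)
    have hne : (⟨a, ha⟩ : Fin T) ≠ ⟨b, hb⟩ := fun h => hab (Fin.mk.inj h)
    simpa [φ, hne] using ztilVal_mean p a

end Expectation

theorem mul_sum_eq_zero_of_mul_sum_pos_eq_zero {R ι : Type*} [Ring R] [LinearOrder R]
    [IsStrictOrderedRing R] {s : Finset ι} {c : R} {v : ι → R} (hv : ∀ i ∈ s, 0 < v i)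
    (h : c * ∑ i ∈ s, v i = 0) (u : ι → R) : c * ∑ i ∈ s, u i = 0 := by
  rcases mul_eq_zero.mp h with hc | hsum
  · rw [hc, zero_mul]
  · have hs : s = ∅ := by
      by_contra hne
      exact (Finset.sum_pos hv (Finset.nonempty_iff_ne_empty.mpr hne)).ne' hsum
    rw [hs, Finset.sum_empty, mul_zero]

theorem stmt7_general (T K : ℕ) (p : ℕ → ℝ) (hp : ∀ t, 0 < p t ∧ p t < 1)
    (Y : ℕ → (ℕ → Bool) → ℝ) :
    ∀ k ≤ K,
      let w : ℕ → ℝ := fun l =>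
        ((T - K : ℝ)⁻¹ * ∑ s ∈ Finset.Ico K T, (p (s - l) * (1 - p (s - l)))⁻¹)⁻¹
      let τ : ℕ → ℝ := fun l =>
        (T - K : ℝ)⁻¹ * ∑ s ∈ Finset.Ico K T, Exp T p (fun z => ztil p z (s - l) * Y s z)
      Exp T p (fun z => (T - K : ℝ)⁻¹ * ∑ t ∈ Finset.Ico K T,
        ztil p z (t - k) *
          (Y t z - ∑ l ∈ Finset.range (K + 1), ztil p z (t - l) * w l * τ l)) = 0 := by
  intro k hk w τ
  set S : ℝ := (T - K : ℝ)⁻¹ * ∑ t ∈ Finset.Ico K T, (p (t - k) * (1 - p (t - k)))⁻¹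
  have h_integrand : ∀ z t, ztil p z (t - k) *
      (Y t z - ∑ l ∈ Finset.range (K + 1), ztil p z (t - l) * w l * τ l) =
      ztil p z (t - k) * Y t z -
        ∑ l ∈ Finset.range (K + 1), w l * τ l * (ztil p z (t - k) * ztil p z (t - l)) := by
    intro z t
    rw [mul_sub, Finset.mul_sum]
    congr 1
    exact Finset.sum_congr rfl fun l _ => by ring
  have h_cross : ∀ t ∈ Finset.Ico K T,
      ∑ l ∈ Finset.range (K + 1), w l * τ l * Exp T p (fun z => ztil p z (t - k) * ztil p z (t - l))
        = w k * τ k * (p (t - k) * (1 - p (t - k)))⁻¹ := by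
    intro t ht
    rw [Finset.mem_Ico] at ht
    rw [Finset.sum_eq_single k]
    · rw [Exp_ztil_mul_ztil T p (by omega) (by omega), if_pos rfl]
    · intro l hl hlk
      rw [Finset.mem_range] at hl
      rw [Exp_ztil_mul_ztil T p (by omega) (by omega), if_neg (by omega), mul_zero]
    · intro hk'
      exact absurd (Finset.mem_range.mpr (Nat.lt_succ_of_le hk)) hk'
  -- `S = 0` (where `w k = 0⁻¹ = 0`) only happens when `T ≤ K`, and then `τ k` vanishes as well.
  have h_τ_eq_zero : S = 0 → τ k = 0 := fun hS =>
    mul_sum_eq_zero_of_mul_sum_pos_eq_zero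
      (fun t _ => inv_pos.mpr (mul_pos (hp _).1 (sub_pos.mpr (hp _).2))) hS _
  calc _ = (T - K : ℝ)⁻¹ * ∑ t ∈ Finset.Ico K T, (Exp T p (fun z => ztil p z (t - k) * Y t z) -
          ∑ l ∈ Finset.range (K + 1),
            w l * τ l * Exp T p (fun z => ztil p z (t - k) * ztil p z (t - l))) := by
        simp only [h_integrand, Exp_const_mul, Exp_sum, Exp_sub]
    _ = τ k - w k * τ k * S := by
        rw [Finset.sum_sub_distrib, Finset.sum_congr rfl h_cross, ← Finset.mul_sum, mul_sub,
          mul_left_comm]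
    _ = 0 := by
        by_cases hS : S = 0
        · simp [h_τ_eq_zero hS]
        · simp only [w]
          rw [mul_comm, ← mul_assoc, mul_inv_cancel₀ hS, one_mul, sub_self]

/-- Population OLS moment condition: with independent Bernoulli(p_t) treatments,
normalized indicators `Z̃_t`, harmonic-mean weights `w_k`, outcomes `Y_t` measurable
w.r.t. the past, and `τ_k = (T-K)⁻¹ Σ_t E[Z̃_{t-k} Y_t]`, for every `k ≤ K`:
`E[(T-K)⁻¹ Σ_{t=K}^{T-1} Z̃_{t-k}(Y_t - Σ_{ℓ=0}^K Z̃_{t-ℓ} w_ℓ τ_ℓ)] = 0`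
(times are indexed `0,...,T-1`, so `t` runs over `K,...,T-1`). -/
theorem stmt7 (T K : ℕ) (hKT : K < T) (p : ℕ → ℝ) (hp : ∀ t, 0 < p t ∧ p t < 1)
    (Y : ℕ → (ℕ → Bool) → ℝ)
    (hYpast : ∀ t (z z' : ℕ → Bool), (∀ s ≤ t, z s = z' s) → Y t z = Y t z') :
    ∀ k ≤ K,
      let w : ℕ → ℝ := fun l =>
        ((T - K : ℝ)⁻¹ * ∑ s ∈ Finset.Ico K T, (p (s - l) * (1 - p (s - l)))⁻¹)⁻¹
      let τ : ℕ → ℝ := fun l =>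
        (T - K : ℝ)⁻¹ * ∑ s ∈ Finset.Ico K T, Exp T p (fun z => ztil p z (s - l) * Y s z)
      Exp T p (fun z => (T - K : ℝ)⁻¹ * ∑ t ∈ Finset.Ico K T,
        ztil p z (t - k) *
          (Y t z - ∑ l ∈ Finset.range (K + 1), ztil p z (t - l) * w l * τ l)) = 0 :=
  stmt7_general T K p hp Y
end

section
/- For independent Bernoulli(p_t) treatments with normalized indicators Z̃_t = (Z_t−p_t)/(p_t(1−p_t)) and any outcome Y_t which is a measurable function of (Z_1,...,Z_t), the identity E[Z̃_{t-k} Y_t] = E[Y_t(Z_{t:t-k+1},1,Z_{t-k-1:1})] − E[Y_t(Z_{t:t-k+1},0,Z_{t-k-1:1})] holds, i.e., the weighted moment recovers the average effect of switching Z_{t-k} from 0 to 1. -/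
lemma sum_pair {T : ℕ} (i : Fin T) (F : (Fin T → Bool) → ℝ) :
    ∑ z : Fin T → Bool, F z
      = ∑ z : Fin T → Bool,
          if z i then F z + F (Function.update z i false) else 0 := by
  have hinv : Function.Involutive
      (fun z : Fin T → Bool => Function.update z i (!z i)) := by
    intro z
    funext j
    by_cases h : j = i
    · subst h; simp
    · simp [Function.update_of_ne h]
  have h2 : (∑ z : Fin T → Bool, if z i then 0 else F z)
      = ∑ z : Fin T → Bool, if z i then F (Function.update z i false) else 0 := by
    rw [← Equiv.sum_comp (Function.Involutive.toPerm _ hinv)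
      (fun z => if z i then F (Function.update z i false) else 0)]
    apply Finset.sum_congr rfl
    intro z _
    have hcoe : Function.Involutive.toPerm _ hinv z = Function.update z i (!z i) := rfl
    rw [hcoe]
    by_cases h : z i
    · simp [h]
    · simp only [Bool.not_eq_true] at h
      have hid : Function.update (Function.update z i (!z i)) i false = z := by
        rw [Function.update_idem]
        funext j
        by_cases hj : j = i
        · subst hj; simp [h]
        · simp [Function.update_of_ne hj]
      have hid2 : Function.update z i false = z := by
        funext j
        by_cases hj : j = i
        · subst hj; simp [h]
        · simp [Function.update_of_ne hj]
      simp [h, hid, hid2]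
  calc ∑ z : Fin T → Bool, F z
      = ∑ z : Fin T → Bool, ((if z i then F z else 0) + (if z i then 0 else F z)) := by
        apply Finset.sum_congr rfl; intro z _; by_cases h : z i <;> simp [h]
    _ = (∑ z : Fin T → Bool, if z i then F z else 0)
        + (∑ z : Fin T → Bool, if z i then 0 else F z) := Finset.sum_add_distrib
    _ = ∑ z : Fin T → Bool,
          if z i then F z + F (Function.update z i false) else 0 := by
        rw [h2, ← Finset.sum_add_distrib]
        apply Finset.sum_congr rfl
        intro z _
        by_cases h : z i <;> simp [h]

/-- For independent Bernoulli(p_t) treatments and an outcome `Y_t = f(Z_t,...,Z_0)`,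
the weighted moment recovers the average effect of switching `Z_{t-k}` from 0 to 1:
`E[Z̃_{t-k} f] = E[f with Z_{t-k}=1] - E[f with Z_{t-k}=0]`
(times are indexed `0,...,T-1`). -/
theorem stmt8 (T t k : ℕ) (ht : t < T) (hk : k ≤ t)
    (p : ℕ → ℝ) (hp : ∀ s, 0 < p s ∧ p s < 1)
    (f : (ℕ → Bool) → ℝ)
    (hf : ∀ z z' : ℕ → Bool, (∀ s ≤ t, z s = z' s) → f z = f z') :
    Exp T p (fun z => ztil p z (t - k) * f z)
      = Exp T p (fun z => f (Function.update z (t - k) true))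
        - Exp T p (fun z => f (Function.update z (t - k) false)) := by
  have hi : t - k < T := lt_of_le_of_lt (Nat.sub_le t k) ht
  set i : Fin T := ⟨t - k, hi⟩ with hidef
  have hp0 : p (t - k) ≠ 0 := ne_of_gt (hp (t - k)).1
  have hp1 : (1 : ℝ) - p (t - k) ≠ 0 := by
    have := (hp (t - k)).2; linarith
  unfold Exp
  conv_lhs => rw [sum_pair i]
  conv_rhs => rw [show ∀ a b : ℝ, a - b = a - b from fun a b => rfl]
  conv_rhs => lhs; rw [sum_pair i]
  conv_rhs => rhs; rw [sum_pair i]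
  rw [← Finset.sum_sub_distrib]
  apply Finset.sum_congr rfl
  intro z _
  by_cases hz : z i
  · simp only [hz, if_pos]
    set z' : Fin T → Bool := Function.update z i false with hz'def
    have hz' : z' i = false := by simp [hz'def]
    set ez : ℕ → Bool := fun n => if h : n < T then z ⟨n, h⟩ else false with hez
    set ez' : ℕ → Bool := fun n => if h : n < T then z' ⟨n, h⟩ else false with hez'
    have hezval : ez (t - k) = true := by
      simp only [hez, dif_pos hi]; exact hz
    have hez'val : ez' (t - k) = false := by
      simp only [hez', dif_pos hi]; exact hz'
    have hu1 : Function.update ez (t - k) true = ez := by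
      funext n; by_cases hn : n = t - k
      · subst hn; simp [hezval]
      · simp [Function.update_of_ne hn]
    have hu2 : Function.update ez (t - k) false = ez' := by
      funext n; by_cases hn : n = t - k
      · subst hn; simp [hez'val]
      · simp only [Function.update_of_ne hn, hez, hez']
        by_cases h : n < T
        · simp only [dif_pos h]
          have : (⟨n, h⟩ : Fin T) ≠ i := by
            intro hc; apply hn; exact congrArg Fin.val hc
          rw [hz'def, Function.update_of_ne this]
        · simp [dif_neg h]
    have hu3 : Function.update ez' (t - k) true = ez := by
      rw [← hu2]; funext n; by_cases hn : n = t - k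
      · subst hn; simp [hezval]
      · simp [Function.update_of_ne hn]
    have hu4 : Function.update ez' (t - k) false = ez' := by
      funext n; by_cases hn : n = t - k
      · subst hn; simp [hez'val]
      · simp [Function.update_of_ne hn]
    have hzt1 : ztil p ez (t - k) = 1 / p (t - k) := by
      rw [ztil, hezval]
      rw [if_pos rfl]
      field_simp
    have hzt2 : ztil p ez' (t - k) = -(1 / (1 - p (t - k))) := by
      rw [ztil, hez'val]
      norm_num
      field_simp
    set W : ℝ := ∏ j ∈ Finset.univ.erase i, if z j then p j.val else 1 - p j.val with hW
    have hWz : (∏ j : Fin T, if z j then p j.val else 1 - p j.val) = p (t - k) * W := by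
      rw [← Finset.mul_prod_erase Finset.univ _ (Finset.mem_univ i), hz, if_pos]
      rfl
    have hWz' : (∏ j : Fin T, if z' j then p j.val else 1 - p j.val)
        = (1 - p (t - k)) * W := by
      rw [← Finset.mul_prod_erase Finset.univ _ (Finset.mem_univ i), hz']
      simp only [Bool.false_eq_true, if_false]
      congr 1
      apply Finset.prod_congr rfl
      intro j hj
      rw [hz'def, Function.update_of_ne (Finset.ne_of_mem_erase hj)]
    rw [hu1, hu2, hu3, hu4, hWz, hWz', hzt1, hzt2]
    field_simp
    ring
  · simp [hz]
end

section
/- (Proposition on full vs. marginal OLS variances) Under the linear model Y_t = Σ_{k=0}^{t-1} β_k Z_{t-k} + ε_t with constant treatment probability p, the asymptotic variance of the full OLS estimator (T−K)^{-1} Var[Σ_{t=K+1}^T Z̃_{t-k}(Y_t − Σ_{ℓ=0}^K Z̃_{t-ℓ} w_ℓ τ_ℓ)] equals (T−K)^{-1} Σ_{t=K+1}^T Σ_{ℓ=K+1}^{t-1} β_ℓ² + (T−K)^{-1} (p(1−p))^{-1} Σ_{t=K+1}^T (p Σ_{k=0}^{t-1} β_k + ε_t)². -/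
/-- Design-based variance of a functional of the treatment path. -/
noncomputable def Var (T : ℕ) (p : ℕ → ℝ) (g : (ℕ → Bool) → ℝ) : ℝ :=
  Exp T p (fun z => (g z) ^ 2) - (Exp T p g) ^ 2

/-!
Write `w = p(1-p)` and `Z_s = p + w Z̃_s`. For `t ≥ K` the fitted residual
`Y_t - Σ_{ℓ ≤ K} Z̃_{t-ℓ} w β_ℓ` is `c_t + Σ_{K < ℓ ≤ t} w β_ℓ Z̃_{t-ℓ}` with
`c_t = p Σ_j β_j + ε_t`, so the score is a linear combination of the monomials
`Z̃_{t-k}` and `Z̃_{t-k} Z̃_{t-ℓ}` (`k ≤ K < ℓ`), which are pairwise distinct.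
For independent coordinates the monomials `∏_{i ∈ s} Z̃_i` have mean zero for `s ≠ ∅` and
`E[∏_s Z̃_i ∏_u Z̃_i] = [s = u] w^{-|s|}`, so the variance of the score is
`w⁻¹ Σ_t c_t² + w⁻² Σ_{t, ℓ} (w β_ℓ)²`.
-/

open Finset

section Expectation

variable {T : ℕ} {p : ℕ → ℝ}

lemma exp_const_mul (c : ℝ) (f : (ℕ → Bool) → ℝ) :
    Exp T p (fun z => c * f z) = c * Exp T p f := by
  simp only [Exp, mul_sum, mul_left_comm]

lemma exp_sum {ι : Type*} (F : Finset ι) (f : ι → (ℕ → Bool) → ℝ) :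
    Exp T p (fun z => ∑ i ∈ F, f i z) = ∑ i ∈ F, Exp T p (f i) := by
  simp only [Exp, mul_sum]
  exact sum_comm

lemma prod_fin_ite_mem {s : Finset ℕ} (hs : s ⊆ range T) (F : ℕ → ℝ) :
    ∏ t : Fin T, (if (t : ℕ) ∈ s then F t else 1) = ∏ t ∈ s, F t := by
  rw [Fin.prod_univ_eq_prod_range (fun t => if t ∈ s then F t else 1), prod_ite_mem,
    inter_eq_right.mpr hs]

lemma exp_prod {s : Finset ℕ} (hs : s ⊆ range T) (f : ℕ → Bool → ℝ) :
    Exp T p (fun z => ∏ t ∈ s, f t (z t))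
      = ∏ t ∈ s, (p t * f t true + (1 - p t) * f t false) := by
  let g : Fin T → Bool → ℝ := fun t b =>
    (if b then p t else 1 - p t) * (if (t : ℕ) ∈ s then f t b else 1)
  have hterm : ∀ z : Fin T → Bool,
      (∏ t : Fin T, if z t then p t else 1 - p t) *
        ∏ t ∈ s, f t (if h : t < T then z ⟨t, h⟩ else false) = ∏ t, g t (z t) := by
    intro z
    rw [prod_mul_distrib, ← prod_fin_ite_mem hs]
    congr 1
    refine prod_congr rfl fun t _ => ?_
    rw [dif_pos t.isLt]
  have hfactor : ∀ t : Fin T, ∑ b, g t b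
      = if (t : ℕ) ∈ s then p t * f t true + (1 - p t) * f t false else 1 := by
    intro t
    split_ifs <;> simp [g, *]
  simp only [Exp, hterm]
  rw [← Fintype.prod_sum, ← prod_fin_ite_mem hs]
  exact prod_congr rfl fun t _ => hfactor t

end Expectation

section Orthogonality

variable {T : ℕ} {p : ℕ → ℝ}

noncomputable def ztilProd (p : ℕ → ℝ) (s : Finset ℕ) (z : ℕ → Bool) : ℝ :=
  ∏ i ∈ s, ztil p z i

lemma ztil_mean (p : ℕ → ℝ) (t : ℕ) :
    p t * ztil p (fun _ => true) t + (1 - p t) * ztil p (fun _ => false) t = 0 := by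
  simp only [ztil, if_true, Bool.false_eq_true, if_false]
  ring

lemma ztil_sq_mean (p : ℕ → ℝ) (t : ℕ) :
    p t * ztil p (fun _ => true) t ^ 2 + (1 - p t) * ztil p (fun _ => false) t ^ 2
      = (p t * (1 - p t))⁻¹ := by
  simp only [ztil, if_true, Bool.false_eq_true, if_false]
  rw [div_pow, div_pow, ← div_self_mul_self', ← sq]
  ring

lemma exp_ztilProd_mul_ztilProd {s u : Finset ℕ} (hs : s ⊆ range T) (hu : u ⊆ range T) :
    Exp T p (fun z => ztilProd p s z * ztilProd p u z)
      = if s = u then ∏ i ∈ s, (p i * (1 - p i))⁻¹ else 0 := by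
  let F : ℕ → Bool → ℝ := fun i b =>
    (if i ∈ s then ztil p (fun _ => b) i else 1) * (if i ∈ u then ztil p (fun _ => b) i else 1)
  have hprod : ∀ z, ztilProd p s z * ztilProd p u z = ∏ i ∈ s ∪ u, F i (z i) := by
    intro z
    rw [prod_mul_distrib, prod_ite_mem, prod_ite_mem, union_inter_cancel_left,
      union_inter_cancel_right]
    rfl
  simp only [hprod]
  rw [exp_prod (union_subset hs hu)]
  split_ifs with hsu
  · subst hsu
    rw [union_self]
    refine prod_congr rfl fun i hi => ?_
    simp only [F, if_pos hi, ← sq, ztil_sq_mean]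
  · obtain ⟨i, hi⟩ := symmDiff_nonempty.mpr hsu
    refine prod_eq_zero (i := i) (mem_union.mpr ?_) ?_
    · rcases mem_symmDiff.mp hi with h | h
      exacts [Or.inl h.1, Or.inr h.1]
    · rcases mem_symmDiff.mp hi with ⟨his, hiu⟩ | ⟨hiu, his⟩
      all_goals simp only [F, his, hiu, if_true, if_false, mul_one, one_mul, ztil_mean]

lemma exp_ztilProd {s : Finset ℕ} (hs : s ⊆ range T) (hne : s.Nonempty) :
    Exp T p (ztilProd p s) = 0 := by
  have h := exp_ztilProd_mul_ztilProd (p := p) hs (empty_subset (range T))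
  simp only [ztilProd, prod_empty, mul_one, hne.ne_empty, if_false] at h
  exact h

end Orthogonality

section Variance

variable {T : ℕ} {p : ℕ → ℝ}

lemma var_sum_of_orthogonal {ι : Type*} (F : Finset ι) (f : ι → (ℕ → Bool) → ℝ)
    (hmean : ∀ i ∈ F, Exp T p (f i) = 0)
    (horth : ∀ i ∈ F, ∀ j ∈ F, i ≠ j → Exp T p (fun z => f i z * f j z) = 0) :
    Var T p (fun z => ∑ i ∈ F, f i z) = ∑ i ∈ F, Exp T p (fun z => f i z ^ 2) := by
  have hsq : ∀ z, (∑ i ∈ F, f i z) ^ 2 = ∑ i ∈ F, ∑ j ∈ F, f i z * f j z := fun z => by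
    rw [sq, sum_mul_sum]
  rw [Var, exp_sum, sum_eq_zero hmean]
  simp only [hsq, exp_sum]
  rw [sq 0, mul_zero, sub_zero]
  refine sum_congr rfl fun i hi => ?_
  rw [sum_eq_single_of_mem i hi fun j hj hji => horth i hi j hj hji.symm]
  simp only [sq]

lemma var_sum_ztilProd {ι : Type*} (F : Finset ι) (a : ι → ℝ) (s : ι → Finset ℕ)
    (hs : ∀ i ∈ F, s i ⊆ range T) (hne : ∀ i ∈ F, (s i).Nonempty) (hinj : Set.InjOn s F) :
    Var T p (fun z => ∑ i ∈ F, a i * ztilProd p (s i) z)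
      = ∑ i ∈ F, a i ^ 2 * ∏ j ∈ s i, (p j * (1 - p j))⁻¹ := by
  rw [var_sum_of_orthogonal F (fun i z => a i * ztilProd p (s i) z)]
  · refine sum_congr rfl fun i hi => ?_
    simp only [mul_pow, sq (ztilProd p (s i) _), exp_const_mul,
      exp_ztilProd_mul_ztilProd (hs i hi) (hs i hi), if_true]
  · intro i hi
    rw [exp_const_mul, exp_ztilProd (hs i hi) (hne i hi), mul_zero]
  · intro i hi j hj hij
    simp only [mul_mul_mul_comm, exp_const_mul, exp_ztilProd_mul_ztilProd (hs i hi) (hs j hj),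
      if_neg fun h => hij (hinj hi hj h), mul_zero]

end Variance

section LinearModel

variable {p : ℝ}

lemma indicator_eq_add_ztil (hw : p * (1 - p) ≠ 0) (z : ℕ → Bool) (s : ℕ) :
    (if z s then (1 : ℝ) else 0) = p + p * (1 - p) * ztil (fun _ => p) z s := by
  rw [ztil, mul_div_cancel₀ _ hw]
  ring

lemma outcome_sub_fit (hw : p * (1 - p) ≠ 0) (β : ℕ → ℝ) (e : ℝ) {K t : ℕ} (hKt : K ≤ t)
    (z : ℕ → Bool) :
    (∑ j ∈ range (t + 1), β j * (if z (t - j) then 1 else 0)) + e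
        - ∑ l ∈ range (K + 1), ztil (fun _ => p) z (t - l) * (p * (1 - p)) * β l
      = (p * ∑ j ∈ range (t + 1), β j + e)
        + ∑ l ∈ Icc (K + 1) t, p * (1 - p) * β l * ztil (fun _ => p) z (t - l) := by
  set γ : ℕ → ℝ := fun l => p * (1 - p) * β l * ztil (fun _ => p) z (t - l)
  have hterm : ∀ j, β j * (if z (t - j) then 1 else 0) = p * β j + γ j := fun j => by
    rw [indicator_eq_add_ztil hw]
    ring
  have hfit : ∀ l, ztil (fun _ => p) z (t - l) * (p * (1 - p)) * β l = γ l := fun l => by ring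
  have hsplit := sum_range_add_sum_Ico γ (by omega : K + 1 ≤ t + 1)
  rw [Ico_add_one_right_eq_Icc] at hsplit
  simp only [hterm, hfit, sum_add_distrib, ← mul_sum, ← hsplit]
  ring

lemma score_of_linear_outcome (hw : p * (1 - p) ≠ 0) (β ε : ℕ → ℝ) (K T k : ℕ)
    (z : ℕ → Bool) :
    ∑ t ∈ Ico K T, ztil (fun _ => p) z (t - k) *
        ((∑ j ∈ range (t + 1), β j * (if z (t - j) then 1 else 0)) + ε t
          - ∑ l ∈ range (K + 1), ztil (fun _ => p) z (t - l) * (p * (1 - p)) * β l)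
      = ∑ t ∈ Ico K T, ztil (fun _ => p) z (t - k) *
          ((p * ∑ j ∈ range (t + 1), β j + ε t)
            + ∑ l ∈ Icc (K + 1) t, p * (1 - p) * β l * ztil (fun _ => p) z (t - l)) :=
  sum_congr rfl fun t ht => by rw [outcome_sub_fit hw β (ε t) (mem_Ico.mp ht).1]

end LinearModel

section Score

/-- The score at lag `k` expands into the monomials `Z̃_{t-k}` (index `inl t`) and
`Z̃_{t-k} Z̃_{t-l}` for `K < l ≤ t` (index `inr ⟨t, l⟩`). -/
def scoreIndex (K T : ℕ) : Finset (ℕ ⊕ (_ : ℕ) × ℕ) :=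
  (Ico K T).disjSum ((Ico K T).sigma fun t => Icc (K + 1) t)

def scoreSupport (k : ℕ) : ℕ ⊕ (_ : ℕ) × ℕ → Finset ℕ :=
  Sum.elim (fun t => {t - k}) (fun q => {q.1 - k, q.1 - q.2})

variable {K T k : ℕ}

lemma scoreSupport_subset {i : ℕ ⊕ (_ : ℕ) × ℕ} (hi : i ∈ scoreIndex K T) :
    scoreSupport k i ⊆ range T := by
  rcases i with t | ⟨t, l⟩
  all_goals simp only [scoreIndex, inl_mem_disjSum, inr_mem_disjSum, mem_sigma, mem_Ico,
    mem_Icc] at hi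
  all_goals intro j hj
  all_goals simp only [scoreSupport, Sum.elim_inl, Sum.elim_inr, mem_singleton, mem_insert] at hj
  all_goals rw [mem_range]; omega

lemma scoreSupport_nonempty (i : ℕ ⊕ (_ : ℕ) × ℕ) : (scoreSupport k i).Nonempty := by
  rcases i with t | ⟨t, l⟩
  exacts [singleton_nonempty _, insert_nonempty _ _]

lemma scoreSupport_injOn (hk : k ≤ K) : Set.InjOn (scoreSupport k) (scoreIndex K T) := by
  rintro (t | ⟨t, l⟩) hi (t' | ⟨t', l'⟩) hj h
  all_goals
    simp only [mem_coe, scoreIndex, inl_mem_disjSum, inr_mem_disjSum, mem_sigma, mem_Ico,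
      mem_Icc] at hi hj
    have hmem := fun x => Finset.ext_iff.mp h x
    simp only [scoreSupport, Sum.elim_inl, Sum.elim_inr, mem_insert, mem_singleton] at hmem
  · have := (hmem (t - k)).mp rfl
    rw [show t = t' by omega]
  · have := (hmem (t' - l')).mpr (Or.inr rfl)
    have := (hmem (t' - k)).mpr (Or.inl rfl)
    omega
  · have := (hmem (t - l)).mp (Or.inr rfl)
    have := (hmem (t - k)).mp (Or.inl rfl)
    omega
  · have := (hmem (t - k)).mp (Or.inl rfl)
    have := (hmem (t - l)).mp (Or.inr rfl)
    have := (hmem (t' - k)).mpr (Or.inl rfl)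
    rw [show t = t' by omega, show l = l' by omega]

lemma score_eq_sum_ztilProd {p : ℕ → ℝ} (hk : k ≤ K) (c γ : ℕ → ℝ) (z : ℕ → Bool) :
    ∑ t ∈ Ico K T, ztil p z (t - k) * (c t + ∑ l ∈ Icc (K + 1) t, γ l * ztil p z (t - l))
      = ∑ i ∈ scoreIndex K T, Sum.elim c (fun q => γ q.2) i * ztilProd p (scoreSupport k i) z := by
  rw [scoreIndex, sum_disjSum, sum_sigma, ← sum_add_distrib]
  refine sum_congr rfl fun t ht => ?_
  rw [mul_add, mul_sum]
  congr 1
  · simp only [Sum.elim_inl, scoreSupport, ztilProd, prod_singleton]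
    ring
  · refine sum_congr rfl fun l hl => ?_
    have hne : t - k ≠ t - l := by
      simp only [mem_Icc] at hl
      omega
    simp only [Sum.elim_inr, scoreSupport, ztilProd, prod_pair hne]
    ring

lemma sum_scoreIndex (hk : k ≤ K) (c γ : ℕ → ℝ) (v : ℝ) :
    ∑ i ∈ scoreIndex K T, Sum.elim c (fun q => γ q.2) i ^ 2 * ∏ _j ∈ scoreSupport k i, v
      = v * ∑ t ∈ Ico K T, c t ^ 2 + v ^ 2 * ∑ t ∈ Ico K T, ∑ l ∈ Icc (K + 1) t, γ l ^ 2 := by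
  rw [scoreIndex, sum_disjSum, sum_sigma, mul_sum, mul_sum]
  congr 1
  · simp only [Sum.elim_inl, scoreSupport, prod_singleton, mul_comm]
  · refine sum_congr rfl fun t _ => ?_
    rw [mul_sum]
    refine sum_congr rfl fun l hl => ?_
    have hne : t - k ≠ t - l := by
      simp only [mem_Icc] at hl
      omega
    simp only [Sum.elim_inr, scoreSupport, prod_pair hne]
    ring

lemma var_score {p : ℝ} (hk : k ≤ K) (c γ : ℕ → ℝ) :
    Var T (fun _ => p) (fun z => ∑ t ∈ Ico K T, ztil (fun _ => p) z (t - k) *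
        (c t + ∑ l ∈ Icc (K + 1) t, γ l * ztil (fun _ => p) z (t - l)))
      = (p * (1 - p))⁻¹ * ∑ t ∈ Ico K T, c t ^ 2
        + (p * (1 - p))⁻¹ ^ 2 * ∑ t ∈ Ico K T, ∑ l ∈ Icc (K + 1) t, γ l ^ 2 := by
  simp only [score_eq_sum_ztilProd hk]
  rw [var_sum_ztilProd _ _ _ (fun _ => scoreSupport_subset) (fun i _ => scoreSupport_nonempty i)
    (scoreSupport_injOn hk), sum_scoreIndex hk]

end Score

theorem stmt9_general (T K k : ℕ) (hk : k ≤ K)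
    (p : ℝ) (hp0 : 0 < p) (hp1 : p < 1)
    (β : ℕ → ℝ) (ε : ℕ → ℝ)
    (Y : ℕ → (ℕ → Bool) → ℝ)
    (hY : ∀ t (z : ℕ → Bool),
      Y t z = (∑ j ∈ Finset.range (t + 1), β j * (if z (t - j) then 1 else 0)) + ε t) :
    (T - K : ℝ)⁻¹ * Var T (fun _ => p) (fun z => ∑ t ∈ Finset.Ico K T,
        ztil (fun _ => p) z (t - k) *
          (Y t z - ∑ l ∈ Finset.range (K + 1),
            ztil (fun _ => p) z (t - l) * (p * (1 - p)) * β l))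
      = (T - K : ℝ)⁻¹ * (∑ t ∈ Finset.Ico K T, ∑ l ∈ Finset.Icc (K + 1) t, (β l) ^ 2)
        + (T - K : ℝ)⁻¹ * (p * (1 - p))⁻¹ *
          ∑ t ∈ Finset.Ico K T, (p * (∑ j ∈ Finset.range (t + 1), β j) + ε t) ^ 2 := by
  have hw : p * (1 - p) ≠ 0 := mul_ne_zero hp0.ne' (sub_ne_zero.mpr hp1.ne')
  have hvw : (p * (1 - p))⁻¹ ^ 2 * (p * (1 - p)) ^ 2 = 1 := by
    rw [← mul_pow, inv_mul_cancel₀ hw, one_pow]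
  simp only [hY, score_of_linear_outcome hw]
  rw [var_score hk]
  simp only [mul_pow, ← mul_sum]
  linear_combination (T - K : ℝ)⁻¹ * (∑ t ∈ Ico K T, ∑ l ∈ Icc (K + 1) t, β l ^ 2) * hvw

/-- (Full OLS variance) Under the linear model `Y_t = Σ_{j=0}^{t} β_j Z_{t-j} + ε_t`
with i.i.d. Bernoulli(p) treatments and nonrandom errors (so `w_ℓ = p(1-p)` and
`τ_ℓ = β_ℓ`), the normalized variance of the full OLS score at lag `k` equals
`(T-K)⁻¹ Σ_t Σ_{ℓ=K+1}^{t} β_ℓ² + (T-K)⁻¹ (p(1-p))⁻¹ Σ_t (p Σ_{j=0}^{t} β_j + ε_t)²`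
(times are indexed `0,...,T-1`, `t` runs over `K,...,T-1`). -/
theorem stmt9 (T K k : ℕ) (hKT : K < T) (hk : k ≤ K)
    (p : ℝ) (hp0 : 0 < p) (hp1 : p < 1)
    (β : ℕ → ℝ) (ε : ℕ → ℝ)
    (Y : ℕ → (ℕ → Bool) → ℝ)
    (hY : ∀ t (z : ℕ → Bool),
      Y t z = (∑ j ∈ Finset.range (t + 1), β j * (if z (t - j) then 1 else 0)) + ε t) :
    (T - K : ℝ)⁻¹ * Var T (fun _ => p) (fun z => ∑ t ∈ Finset.Ico K T,
        ztil (fun _ => p) z (t - k) *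
          (Y t z - ∑ l ∈ Finset.range (K + 1),
            ztil (fun _ => p) z (t - l) * (p * (1 - p)) * β l))
      = (T - K : ℝ)⁻¹ * (∑ t ∈ Finset.Ico K T, ∑ l ∈ Finset.Icc (K + 1) t, (β l) ^ 2)
        + (T - K : ℝ)⁻¹ * (p * (1 - p))⁻¹ *
          ∑ t ∈ Finset.Ico K T, (p * (∑ j ∈ Finset.range (t + 1), β j) + ε t) ^ 2 :=
  stmt9_general T K k hk p hp0 hp1 β ε Y hY
end

section
/- (Continuous-treatment weight representation) Let Z be a real random variable with finite variance σ² > 0 and let Y = f(Z) for a bounded measurable f. Then E[(Z − E[Z]) f(Z)] = ∫ (E[f(Z) | Z ≥ z] − E[f(Z) | Z < z]) P(Z ≥ z) P(Z < z) dz, whenever both conditional expectations are well-defined for almost every z. -/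
/-!
Writing `x = ∫ (𝟙{z ≤ x} - 𝟙{z ≤ 0}) dz`, where the kernel has total mass `|x|`, Fubini gives
`E[Z g] = ∫ E[𝟙{z ≤ Z} g] dz` for every bounded `g` with `E g = 0`. For `g = f(Z) - E f(Z)` the
left side is the covariance, and since `P(Z ≥ z) + P(Z < z) = 1` the integrand
`E[f(Z); Z ≥ z] - E[f(Z)] P(Z ≥ z)` is exactly the weight `w(z)`.
-/

open MeasureTheory Set
open scoped ENNReal

noncomputable def signedIntervalIndicator (a z : ℝ) : ℝ :=
  (if z ≤ a then 1 else 0) - if z ≤ 0 then 1 else 0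

lemma signedIntervalIndicator_eq (a : ℝ) :
    signedIntervalIndicator a = (Ioc 0 a).indicator 1 - (Ioc a 0).indicator 1 := by
  ext z
  simp only [signedIntervalIndicator, Pi.sub_apply, indicator_apply, mem_Ioc, Pi.one_apply]
  split_ifs <;> grind

lemma abs_signedIntervalIndicator (a : ℝ) :
    (fun z => |signedIntervalIndicator a z|)
      = (Ioc 0 a).indicator 1 + (Ioc a 0).indicator 1 := by
  ext z
  simp only [signedIntervalIndicator, Pi.add_apply, indicator_apply, mem_Ioc, Pi.one_apply]
  split_ifs <;> grind

lemma integrable_indicator_one_Ioc (a b : ℝ) : Integrable ((Ioc a b).indicator (1 : ℝ → ℝ)) :=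
  (integrable_indicator_iff measurableSet_Ioc).2 (integrableOn_const measure_Ioc_lt_top.ne)

lemma integrable_signedIntervalIndicator (a : ℝ) : Integrable (signedIntervalIndicator a) := by
  rw [signedIntervalIndicator_eq]
  exact (integrable_indicator_one_Ioc 0 a).sub (integrable_indicator_one_Ioc a 0)

lemma integral_signedIntervalIndicator (a : ℝ) : ∫ z, signedIntervalIndicator a z = a := by
  rw [signedIntervalIndicator_eq, integral_sub' (integrable_indicator_one_Ioc 0 a)
    (integrable_indicator_one_Ioc a 0), integral_indicator_one measurableSet_Ioc,
    integral_indicator_one measurableSet_Ioc, Real.volume_real_Ioc, Real.volume_real_Ioc,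
    sub_zero, zero_sub, max_zero_sub_max_neg_zero_eq_self]

lemma integral_abs_signedIntervalIndicator (a : ℝ) :
    ∫ z, |signedIntervalIndicator a z| = |a| := by
  rw [abs_signedIntervalIndicator, integral_add' (integrable_indicator_one_Ioc 0 a)
    (integrable_indicator_one_Ioc a 0), integral_indicator_one measurableSet_Ioc,
    integral_indicator_one measurableSet_Ioc, Real.volume_real_Ioc, Real.volume_real_Ioc,
    sub_zero, zero_sub, max_zero_add_max_neg_zero_eq_abs_self]

section LayerCake

variable {Ω : Type*} [MeasurableSpace Ω] {μ : Measure Ω} {X g : Ω → ℝ}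

theorem integral_mul_eq_integral_integral_signedIntervalIndicator [SFinite μ]
    (hX : Measurable X) (hXg : Integrable (fun ω => X ω * g ω) μ) (hg : AEStronglyMeasurable g μ) :
    ∫ ω, X ω * g ω ∂μ = ∫ z, ∫ ω, signedIntervalIndicator (X ω) z * g ω ∂μ := by
  have hmeas : AEStronglyMeasurable
      (Function.uncurry fun ω z => signedIntervalIndicator (X ω) z * g ω) (μ.prod volume) := by
    refine AEStronglyMeasurable.mul ?_ hg.comp_fst
    refine Measurable.aestronglyMeasurable (Measurable.sub ?_ ?_) <;>
      refine Measurable.ite ?_ measurable_const measurable_const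
    · exact measurableSet_le measurable_snd (hX.comp measurable_fst)
    · exact measurableSet_le measurable_snd measurable_const
  have hint : Integrable
      (Function.uncurry fun ω z => signedIntervalIndicator (X ω) z * g ω) (μ.prod volume) := by
    rw [integrable_prod_iff hmeas]
    refine ⟨ae_of_all _ fun ω =>
      (integrable_signedIntervalIndicator (X ω)).mul_const (g ω), ?_⟩
    simpa [abs_mul, integral_mul_const, integral_abs_signedIntervalIndicator] using hXg.norm
  calc ∫ ω, X ω * g ω ∂μ
      = ∫ ω, (∫ z, signedIntervalIndicator (X ω) z * g ω) ∂μ := by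
        simp only [integral_mul_const, integral_signedIntervalIndicator]
    _ = _ := integral_integral_swap hint

theorem integral_mul_eq_integral_setIntegral_le [SFinite μ] (hX : Measurable X)
    (hXg : Integrable (fun ω => X ω * g ω) μ) (hg : Integrable g μ) (hg0 : ∫ ω, g ω ∂μ = 0) :
    ∫ ω, X ω * g ω ∂μ = ∫ z, ∫ ω in {ω | z ≤ X ω}, g ω ∂μ := by
  rw [integral_mul_eq_integral_integral_signedIntervalIndicator hX hXg hg.aestronglyMeasurable]
  refine integral_congr_ae (ae_of_all _ fun z => ?_)
  have hsplit : (fun ω => signedIntervalIndicator (X ω) z * g ω)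
      = fun ω => {ω | z ≤ X ω}.indicator g ω - (if z ≤ 0 then 1 else 0) * g ω := by
    ext ω
    simp only [signedIntervalIndicator, indicator_apply, mem_ofPred_eq, sub_mul, ite_mul,
      one_mul, zero_mul]
  dsimp only
  rw [hsplit, integral_sub (hg.indicator (measurableSet_le measurable_const hX))
    (hg.const_mul _), integral_indicator (measurableSet_le measurable_const hX),
    integral_const_mul, hg0, mul_zero, sub_zero]

theorem integral_sub_integral_mul_eq_integral_mul_sub (hX : Integrable X μ) (hg : Integrable g μ)
    (hXg : Integrable (fun ω => X ω * g ω) μ) :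
    ∫ ω, (X ω - ∫ ω', X ω' ∂μ) * g ω ∂μ = ∫ ω, X ω * (g ω - ∫ ω', g ω' ∂μ) ∂μ := by
  simp only [sub_mul, mul_sub]
  rw [integral_sub hXg (hg.const_mul _), integral_sub hXg (hX.mul_const _), integral_const_mul,
    integral_mul_const, mul_comm]

end LayerCake

-- Because `x / 0 = 0`, the identity persists when `p = 0` or `q = 0`.
lemma div_sub_div_mul_mul_eq {A B p q : ℝ} (hpq : p + q = 1) (hA : p = 0 → A = 0)
    (hB : q = 0 → B = 0) : (A / p - B / q) * p * q = A - (A + B) * p := by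
  rcases eq_or_ne p 0 with hp | hp
  · simp [hp, hA hp]
  rcases eq_or_ne q 0 with hq | hq
  · simp [hq, hB hq, show p = 1 by linarith]
  calc (A / p - B / q) * p * q = A * q - B * p := by field_simp
    _ = A - (A + B) * p := by linear_combination A * hpq

theorem setIntegral_sub_integral_mul_measureReal {Ω : Type*} [MeasurableSpace Ω] {μ : Measure Ω}
    [IsProbabilityMeasure μ] {h : Ω → ℝ} {s : Set Ω} (hs : MeasurableSet s)
    (hh : Integrable h μ) :
    ∫ ω in s, h ω ∂μ - (∫ ω, h ω ∂μ) * μ.real s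
      = ((∫ ω in s, h ω ∂μ) / μ.real s - (∫ ω in sᶜ, h ω ∂μ) / μ.real sᶜ)
          * μ.real s * μ.real sᶜ := by
  rw [← integral_add_compl hs hh]
  refine (div_sub_div_mul_mul_eq ((measureReal_add_measureReal_compl hs).trans probReal_univ)
    (fun h0 => ?_) (fun h0 => ?_)).symm <;>
    exact setIntegral_measure_zero _ ((measureReal_eq_zero_iff).1 h0)

theorem stmt19_general {Ω : Type*} [MeasurableSpace Ω] (μ : Measure Ω) [IsProbabilityMeasure μ]
    (Z : Ω → ℝ) (hZmeas : Measurable Z) (hZ2 : MeasureTheory.MemLp Z 2 μ)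
    (f : ℝ → ℝ) (hf : Measurable f) (C : ℝ) (hfb : ∀ x, |f x| ≤ C) :
    ∫ ω, (Z ω - ∫ ω', Z ω' ∂μ) * f (Z ω) ∂μ
      = ∫ z : ℝ,
          ((∫ ω in {ω | z ≤ Z ω}, f (Z ω) ∂μ) / (μ {ω | z ≤ Z ω}).toReal
            - (∫ ω in {ω | Z ω < z}, f (Z ω) ∂μ) / (μ {ω | Z ω < z}).toReal)
          * (μ {ω | z ≤ Z ω}).toReal * (μ {ω | Z ω < z}).toReal := by
  have hZ : Integrable Z μ := hZ2.integrable one_le_two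
  have hfZ : MemLp (fun ω => f (Z ω)) ∞ μ :=
    memLp_top_of_bound (hf.comp hZmeas).aestronglyMeasurable C (ae_of_all _ fun ω => hfb (Z ω))
  have hfZ₁ : Integrable (fun ω => f (Z ω)) μ := hfZ.integrable le_top
  set T := ∫ ω, f (Z ω) ∂μ
  have hg : MemLp (fun ω => f (Z ω) - T) ∞ μ := hfZ.sub (memLp_const T)
  have hg0 : ∫ ω, (f (Z ω) - T) ∂μ = 0 := by
    rw [integral_sub hfZ₁ (integrable_const T), integral_const, probReal_univ, one_smul, sub_self]
  rw [integral_sub_integral_mul_eq_integral_mul_sub hZ hfZ₁ (hZ.mul_of_top_left hfZ),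
    integral_mul_eq_integral_setIntegral_le hZmeas (hZ.mul_of_top_left hg) (hg.integrable le_top)
      hg0]
  congr 1 with z
  have hcompl : {ω | Z ω < z} = {ω | z ≤ Z ω}ᶜ := by ext; simp
  rw [hcompl, integral_sub hfZ₁.integrableOn integrableOn_const, setIntegral_const, smul_eq_mul,
    mul_comm]
  exact setIntegral_sub_integral_mul_measureReal (measurableSet_le measurable_const hZmeas) hfZ₁

/-- (Continuous-treatment weight representation) Let `Z` be a real random variable
with finite positive variance and let `Y = f(Z)` for a bounded measurable `f`.
Then `E[(Z - E[Z]) f(Z)] = ∫ (E[f(Z) | Z ≥ z] - E[f(Z) | Z < z]) P(Z ≥ z) P(Z < z) dz`,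
where the conditional expectations are the ratios of restricted integrals to the
probabilities of the conditioning events. -/
theorem stmt19 {Ω : Type*} [MeasurableSpace Ω] (μ : Measure Ω) [IsProbabilityMeasure μ]
    (Z : Ω → ℝ) (hZmeas : Measurable Z) (hZ2 : MeasureTheory.MemLp Z 2 μ)
    (hσ : 0 < ProbabilityTheory.variance Z μ)
    (f : ℝ → ℝ) (hf : Measurable f) (C : ℝ) (hfb : ∀ x, |f x| ≤ C) :
    ∫ ω, (Z ω - ∫ ω', Z ω' ∂μ) * f (Z ω) ∂μ
      = ∫ z : ℝ,
          ((∫ ω in {ω | z ≤ Z ω}, f (Z ω) ∂μ) / (μ {ω | z ≤ Z ω}).toReal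
            - (∫ ω in {ω | Z ω < z}, f (Z ω) ∂μ) / (μ {ω | Z ω < z}).toReal)
          * (μ {ω | z ≤ Z ω}).toReal * (μ {ω | Z ω < z}).toReal :=
  stmt19_general μ Z hZmeas hZ2 f hf C hfb
end
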